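/- Let D = H ∪ H̃ be an n-run foldover OofA design on m components with n = 2h, h ≥ 2, and all n runs distinct, where H̃ consists of the reverses of the runs in H. Then the second moment of the pairwise Kendall tau distances satisfies k_{m2}(D) ≤ [ n m²(m−1)² − 4(n−2){m(m−1)−2} ] / (8(n−1)). -/

import Mathlib

/-!
Reversing a run negates every position difference, so each of the `K = m.choose 2` pairs of
components is discordant for exactly one of `(x, y)` and `(x, ỹ)`: `k(x, y) + k(x, ỹ) = K`.
Summing over ordered pairs of rows, the squared distances of the foldover design add up to
twice `∑ i j, k(x_i, x_j)² + k(x_i, x̃_j)²`. The diagonal terms are `0 + K²`; off the diagonal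
both distances are at least `1` because the runs are distinct, and `a² + b² ≤ 1 + (K - 1)²`
whenever `a + b = K` and `a, b ≥ 1`.
-/

/-- A run (addition order) on `m` components: position `r` receives component `x r`.
The position map `π_x` is `x.symm`. -/
abbrev Run (m : ℕ) := Equiv.Perm (Fin m)

/-- Kendall tau distance between two runs. -/
def kendall {m : ℕ} (x y : Run m) : ℕ :=
  (Finset.univ.filter fun p : Fin m × Fin m =>
    p.1 < p.2 ∧
      (((x.symm p.1 : ℕ) : ℤ) - ((x.symm p.2 : ℕ) : ℤ)) *
        (((y.symm p.1 : ℕ) : ℤ) - ((y.symm p.2 : ℕ) : ℤ)) < 0).card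

/-- The foldover (reverse) of a run: `x̃ r = x (m+1-r)` (positions reversed). -/
def revRun {m : ℕ} (x : Run m) : Run m := Fin.revPerm.trans x

/-- The `2h`-run foldover design `D = H ∪ H̃` generated by a half-design
`H = (x_1, …, x_h)`: its first `h` rows are the `x_i` and its last `h` rows
are their reverses `x̃_i`. -/
def foldover {m h : ℕ} (H : Fin h → Run m) : Fin (h + h) → Run m :=
  Fin.append H fun i => revRun (H i)

/-- Average pairwise Kendall tau distance of an `n`-run design. -/
noncomputable def kave {m n : ℕ} (D : Fin n → Run m) : ℝ :=
  (∑ p ∈ Finset.univ.filter (fun p : Fin n × Fin n => p.1 < p.2),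
      (kendall (D p.1) (D p.2) : ℝ)) / (n.choose 2 : ℝ)

/-- Second moment of the pairwise Kendall tau distances of an `n`-run design. -/
noncomputable def km2 {m n : ℕ} (D : Fin n → Run m) : ℝ :=
  (∑ p ∈ Finset.univ.filter (fun p : Fin n × Fin n => p.1 < p.2),
      (kendall (D p.1) (D p.2) : ℝ) ^ 2) / (n.choose 2 : ℝ)

/-- Minimum pairwise Kendall tau distance of a design. -/
noncomputable def kmin {m n : ℕ} (D : Fin n → Run m) : ℕ :=
  sInf {v : ℕ | ∃ i j : Fin n, i < j ∧ kendall (D i) (D j) = v}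

open Finset

def posDiff {m : ℕ} (x : Run m) (a b : Fin m) : ℤ :=
  ((x.symm a : ℕ) : ℤ) - ((x.symm b : ℕ) : ℤ)

section Kendall

variable {m : ℕ}

lemma kendall_eq_card (x y : Run m) :
    kendall x y = #{p : Fin m × Fin m | p.1 < p.2 ∧ posDiff x p.1 p.2 * posDiff y p.1 p.2 < 0} :=
  rfl

lemma posDiff_swap (x : Run m) (a b : Fin m) : posDiff x b a = -posDiff x a b := by
  simp only [posDiff]; ring

lemma posDiff_ne_zero (x : Run m) {a b : Fin m} (hab : a ≠ b) : posDiff x a b ≠ 0 := by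
  simpa [posDiff, sub_eq_zero, Fin.val_inj] using hab

lemma revRun_symm_apply (x : Run m) (c : Fin m) : (revRun x).symm c = (x.symm c).rev := by
  simp [revRun, Fin.revPerm_symm]

lemma posDiff_revRun (x : Run m) (a b : Fin m) : posDiff (revRun x) a b = -posDiff x a b := by
  simp only [posDiff, revRun_symm_apply, Fin.val_rev]
  have := (x.symm a).isLt
  have := (x.symm b).isLt
  omega

lemma kendall_comm (x y : Run m) : kendall x y = kendall y x := by
  simp only [kendall_eq_card, mul_comm (posDiff x _ _)]

lemma kendall_self (x : Run m) : kendall x x = 0 := by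
  simp [kendall_eq_card, mul_self_nonneg]

lemma kendall_revRun_revRun (x y : Run m) : kendall (revRun x) (revRun y) = kendall x y := by
  simp only [kendall_eq_card, posDiff_revRun, neg_mul_neg]

lemma kendall_revRun_left (x y : Run m) : kendall (revRun x) y = kendall x (revRun y) := by
  simp only [kendall_eq_card, posDiff_revRun, neg_mul, mul_neg]

lemma kendall_add_kendall_revRun (x y : Run m) :
    kendall x y + kendall x (revRun y) = m.choose 2 := by
  have hpairs := Fintype.card_product_filter_lt (α := Fin m)
  rw [Fintype.card_fin] at hpairs
  rw [← hpairs, kendall_eq_card, kendall_eq_card, ← filter_filter, ← filter_filter,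
    ← card_filter_add_card_filter_not (s := {p : Fin m × Fin m | p.1 < p.2})
      (fun p => posDiff x p.1 p.2 * posDiff y p.1 p.2 < 0)]
  congr 2
  refine filter_congr fun p hp => ?_
  have hne := mul_ne_zero (posDiff_ne_zero x (mem_filter.1 hp).2.ne)
    (posDiff_ne_zero y (mem_filter.1 hp).2.ne)
  rw [posDiff_revRun, mul_neg, neg_lt_zero, not_lt, le_iff_lt_or_eq]
  exact (or_iff_left hne.symm).symm

lemma kendall_self_revRun (x : Run m) : kendall x (revRun x) = m.choose 2 := by
  simpa [kendall_self] using kendall_add_kendall_revRun x x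

lemma eq_of_kendall_eq_zero {x y : Run m} (h : kendall x y = 0) : x = y := by
  have hnonneg : ∀ a b, a < b → 0 ≤ posDiff x a b * posDiff y a b := fun a b hab =>
    not_lt.1 fun hneg => filter_eq_empty_iff.1 (card_eq_zero.1 h) (mem_univ (a, b)) ⟨hab, hneg⟩
  have hconc : ∀ a b, a ≠ b → 0 < posDiff x a b * posDiff y a b := by
    intro a b hab
    have hne := mul_ne_zero (posDiff_ne_zero x hab) (posDiff_ne_zero y hab)
    refine lt_of_le_of_ne ?_ hne.symm
    rcases hab.lt_or_gt with hlt | hlt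
    · exact hnonneg a b hlt
    · simpa only [posDiff_swap x b, posDiff_swap y b, neg_mul_neg] using hnonneg b a hlt
  have hmono : StrictMono (y.symm ∘ x) := fun i j hij => by
    have hx : posDiff x (x i) (x j) < 0 := by simpa [posDiff] using hij
    have hy := neg_of_mul_pos_right (hconc _ _ (x.injective.ne hij.ne)) hx.le
    simpa [posDiff] using hy
  exact Equiv.ext fun i => by simpa using congrArg y (hmono.apply_eq (x := i))

end Kendall

lemma sum_filter_lt_add_sum_filter_lt {ι M : Type*} [Fintype ι] [LinearOrder ι] [AddCommMonoid M]
    (f : ι → ι → M) (hsymm : ∀ i j, f i j = f j i) (hdiag : ∀ i, f i i = 0) :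
    ∑ p ∈ {p : ι × ι | p.1 < p.2}, f p.1 p.2 + ∑ p ∈ {p : ι × ι | p.1 < p.2}, f p.1 p.2 =
      ∑ i, ∑ j, f i j := by
  have hsplit : ∀ p : ι × ι, f p.1 p.2 =
      (if p.1 < p.2 then f p.1 p.2 else 0) + (if p.2 < p.1 then f p.2 p.1 else 0) := by
    rintro ⟨i, j⟩
    rcases lt_trichotomy i j with hij | rfl | hij
    · simp [hij, hij.not_gt]
    · simp [hdiag]
    · simp [hij, hij.not_gt, hsymm]
  rw [← Fintype.sum_prod_type']
  calc
    _ = (∑ p : ι × ι, if p.1 < p.2 then f p.1 p.2 else 0) +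
          ∑ p : ι × ι, if p.2 < p.1 then f p.2 p.1 else 0 := by
      rw [← sum_filter, ← sum_filter]
      congr 1
      exact sum_equiv (Equiv.prodComm ι ι) (by simp) (by simp)
    _ = _ := by rw [← sum_add_distrib]; exact sum_congr rfl fun p _ => (hsplit p).symm

lemma sum_sum_foldover {M : Type*} [AddCommMonoid M] {m h : ℕ} (H : Fin h → Run m)
    (g : Run m → Run m → M) (hrr : ∀ x y, g (revRun x) (revRun y) = g x y)
    (hr : ∀ x y, g (revRun x) y = g x (revRun y)) :
    ∑ i, ∑ j, g (foldover H i) (foldover H j) =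
      2 • ∑ i, ∑ j, (g (H i) (H j) + g (H i) (revRun (H j))) := by
  simp only [foldover, Fin.sum_univ_add, Fin.append_left, Fin.append_right, hrr, hr,
    sum_add_distrib]
  abel

section Bound

variable {m h : ℕ}

lemma kendall_sq_add_kendall_revRun_sq_le {x y : Run m} (hxy : x ≠ y) (hxy' : x ≠ revRun y) :
    (kendall x y : ℝ) ^ 2 + (kendall x (revRun y) : ℝ) ^ 2 ≤ 1 + ((m.choose 2 : ℝ) - 1) ^ 2 := by
  have one_le : ∀ {z}, x ≠ z → (1 : ℝ) ≤ kendall x z := fun hz => by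
    exact_mod_cast Nat.one_le_iff_ne_zero.2 (hz ∘ eq_of_kendall_eq_zero)
  have hsum : (kendall x y : ℝ) + kendall x (revRun y) = m.choose 2 := by
    exact_mod_cast kendall_add_kendall_revRun x y
  nlinarith [mul_nonneg (sub_nonneg.2 (one_le hxy)) (sub_nonneg.2 (one_le hxy'))]

lemma sum_kendall_sq_add_kendall_revRun_sq_le {H : Fin h → Run m} (hH : Function.Injective H)
    (hrev : ∀ i j, H i ≠ revRun (H j)) (i : Fin h) :
    ∑ j, ((kendall (H i) (H j) : ℝ) ^ 2 + (kendall (H i) (revRun (H j)) : ℝ) ^ 2) ≤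
      (m.choose 2 : ℝ) ^ 2 + (h - 1) * (1 + ((m.choose 2 : ℝ) - 1) ^ 2) := by
  rw [← add_sum_erase _ _ (mem_univ i), kendall_self, kendall_self_revRun, Nat.cast_zero,
    zero_pow two_ne_zero, zero_add]
  gcongr
  calc _ ≤ #(univ.erase i) • (1 + ((m.choose 2 : ℝ) - 1) ^ 2) :=
        sum_le_card_nsmul _ _ _ fun j hj =>
          kendall_sq_add_kendall_revRun_sq_le (hH.ne (ne_of_mem_erase hj).symm) (hrev i j)
    _ = _ := by
      rw [card_erase_of_mem (mem_univ i), card_univ, Fintype.card_fin, nsmul_eq_mul,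
        Nat.cast_pred i.pos]

lemma km2_foldover_le {H : Fin h → Run m} (hdist : Function.Injective (foldover H)) (hh : 1 ≤ h) :
    km2 (foldover H) ≤
      ((m.choose 2 : ℝ) ^ 2 + (h - 1) * (1 + ((m.choose 2 : ℝ) - 1) ^ 2)) / (2 * h - 1) := by
  obtain ⟨hH, -, hrev⟩ := Fin.append_injective_iff.1 hdist
  set S := ∑ p ∈ {p : Fin (h + h) × Fin (h + h) | p.1 < p.2},
    (kendall (foldover H p.1) (foldover H p.2) : ℝ) ^ 2
  have hS : S + S = 2 • ∑ i, ∑ j,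
      ((kendall (H i) (H j) : ℝ) ^ 2 + (kendall (H i) (revRun (H j)) : ℝ) ^ 2) := by
    rw [sum_filter_lt_add_sum_filter_lt (fun i j => (kendall (foldover H i) (foldover H j) : ℝ) ^ 2)
      (fun i j => by rw [kendall_comm]) (fun i => by simp [kendall_self])]
    exact sum_sum_foldover H (fun x y => (kendall x y : ℝ) ^ 2)
      (fun x y => by rw [kendall_revRun_revRun]) (fun x y => by rw [kendall_revRun_left])
  have hrows := sum_le_card_nsmul univ _ _ fun i (_ : i ∈ univ) =>
    sum_kendall_sq_add_kendall_revRun_sq_le hH hrev i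
  rw [card_univ, Fintype.card_fin, nsmul_eq_mul] at hrows
  have hSle : S ≤ h * ((m.choose 2 : ℝ) ^ 2 + (h - 1) * (1 + ((m.choose 2 : ℝ) - 1) ^ 2)) := by
    rw [two_nsmul] at hS
    linarith
  have hh' : (0 : ℝ) < h := by exact_mod_cast hh
  have hchoose : (((h + h).choose 2 : ℕ) : ℝ) = h * (2 * h - 1) := by
    rw [Nat.cast_choose_two]; push_cast; ring
  calc km2 (foldover H) = S / (h * (2 * h - 1)) := by rw [← hchoose]; rfl
    _ ≤ _ := by
      rw [← mul_div_mul_left _ (2 * (h : ℝ) - 1) hh'.ne']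
      gcongr
      linarith [(by exact_mod_cast hh : (1 : ℝ) ≤ h)]

end Bound

theorem stmt16_general {m h : ℕ} (hh : 2 ≤ h) (H : Fin h → Run m)
    (hdist : Function.Injective (foldover H)) :
    km2 (foldover H) ≤
      ((2 * (h : ℝ)) * (m : ℝ) ^ 2 * ((m : ℝ) - 1) ^ 2 -
          4 * (2 * (h : ℝ) - 2) * ((m : ℝ) * ((m : ℝ) - 1) - 2)) /
        (8 * (2 * (h : ℝ) - 1)) := by
  have hh' : (2 : ℝ) ≤ h := by exact_mod_cast hh
  calc km2 (foldover H)
      ≤ ((m.choose 2 : ℝ) ^ 2 + (h - 1) * (1 + ((m.choose 2 : ℝ) - 1) ^ 2)) / (2 * h - 1) :=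
        km2_foldover_le hdist (by omega)
    _ = _ := by
      rw [Nat.cast_choose_two]
      field_simp [show (2 * h - 1 : ℝ) ≠ 0 by linarith]
      ring

/-- Upper bound for the second Kendall tau distance moment of a nonreplicated
foldover design with `n = 2h` runs. -/
theorem stmt16 {m h : ℕ} (hm : 2 ≤ m) (hh : 2 ≤ h) (H : Fin h → Run m)
    (hdist : Function.Injective (foldover H)) :
    km2 (foldover H) ≤
      ((2 * (h : ℝ)) * (m : ℝ) ^ 2 * ((m : ℝ) - 1) ^ 2 -
          4 * (2 * (h : ℝ) - 2) * ((m : ℝ) * ((m : ℝ) - 1) - 2)) /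
        (8 * (2 * (h : ℝ) - 1)) :=
  stmt16_general hh H hdist
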